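/- Let θ be a probability measure on G and let m be a probability measure on G equivalent to λ. Then Δ(m, θ^{*k}) → 0 as k → ∞ if and only if ‖gθ^{*k} − θ^{*k}‖ → 0 as k → ∞ for λ-almost every g ∈ G. -/

import Mathlib

/-
The map `g ↦ ‖gθ^{*k} − θ^{*k}‖` is non-increasing in `k`: since `θ^{*(k+1)} = θ^{*k} * θ` and left
translation commutes with right convolution, `gθ^{*(k+1)} − θ^{*(k+1)} = (gθ^{*k} − θ^{*k}) * θ`, and
convolving on the right with a probability measure does not increase total variation. It is also
measurable in `g`, because by the Hahn decomposition `(μ − ν)(G)` is the supremum of `μ t − ν t` over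
a countable algebra of sets generating the Borel σ-algebra. For a non-increasing sequence of
non-negative bounded functions, the `m`-integrals tend to `0` iff the functions tend to `0`
`m`-almost everywhere (monotone convergence), and `m` and `λ` have the same null sets.
-/

open MeasureTheory Filter Topology

/-- Total variation norm `‖μ − ν‖` of the difference of two finite measures. -/
noncomputable def tv {α : Type*} [MeasurableSpace α] (μ ν : Measure α) : ℝ :=
  ((μ - ν) Set.univ + (ν - μ) Set.univ).toReal

/-- Pushforward `gμ` of a measure on `G` under the left translation `h ↦ g * h`. -/
noncomputable def ltrans {G : Type*} [MeasurableSpace G] [Mul G] (g : G) (μ : Measure G) :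
    Measure G :=
  μ.map (fun h => g * h)

/-- Convolution `α * β` of measures on `G`: the pushforward of `α ⊗ β` under
`(g, h) ↦ g * h`. -/
noncomputable def mconv {G : Type*} [MeasurableSpace G] [Mul G] (μ ν : Measure G) : Measure G :=
  (μ.prod ν).map (fun p : G × G => p.1 * p.2)

/-- `convPow θ k = θ^{*k}`, the `k`-th convolution power of `θ` (with `θ^{*0} = δ_1`). -/
noncomputable def convPow {G : Type*} [MeasurableSpace G] [Monoid G] (θ : Measure G) :
    ℕ → Measure G
  | 0 => Measure.dirac 1
  | (k + 1) => mconv θ (convPow θ k)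

/-- Mean discrepancy `Δ(m, θ) = ∫_G ‖gθ − θ‖ dm(g)`. -/
noncomputable def disc {G : Type*} [MeasurableSpace G] [Mul G] (m θ : Measure G) : ℝ :=
  ∫ g, tv (ltrans g θ) θ ∂m

open scoped ENNReal symmDiff

namespace MeasureTheory.Measure

variable {X : Type*} [MeasurableSpace X]

theorem add_sub_eq_sub_add (μ ν : Measure X) [IsFiniteMeasure μ] [IsFiniteMeasure ν] :
    μ + (ν - μ) = μ - ν + ν := by
  rw [← toSignedMeasure_eq_toSignedMeasure_iff, toSignedMeasure_add, toSignedMeasure_add,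
    ← sub_eq_sub_iff_add_eq_add]
  exact sub_toSignedMeasure_eq_toSignedMeasure_sub

theorem le_sub_add (μ ν : Measure X) [IsFiniteMeasure μ] [IsFiniteMeasure ν] :
    μ ≤ μ - ν + ν :=
  add_sub_eq_sub_add μ ν ▸ Measure.le_add_right le_rfl

theorem sub_apply_univ_of_isHahnDecomposition {μ ν : Measure X} [IsFiniteMeasure ν] {s : Set X}
    (hs : IsHahnDecomposition ν μ s) : (μ - ν) Set.univ = μ s - ν s := by
  rw [← measure_add_measure_compl hs.measurableSet,
    sub_apply_eq_zero_of_isHahnDecomposition hs.compl, add_zero, ← restrict_apply_univ,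
    restrict_sub_eq_restrict_sub_restrict hs.measurableSet, sub_apply MeasurableSet.univ hs.le_on,
    restrict_apply_univ, restrict_apply_univ]

theorem sub_apply_univ_eq_biSup {𝒜 : Set (Set X)} (h𝒜 : IsSetAlgebra 𝒜)
    (hgen : ‹MeasurableSpace X› = MeasurableSpace.generateFrom 𝒜)
    (μ ν : Measure X) [IsFiniteMeasure μ] [IsFiniteMeasure ν] :
    (μ - ν) Set.univ = ⨆ t ∈ 𝒜, (μ t - ν t) := by
  refine le_antisymm ?_ (iSup₂_le fun t _ => ?_)
  · obtain ⟨s, hs⟩ := exists_isHahnDecomposition ν μ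
    rw [sub_apply_univ_of_isHahnDecomposition hs]
    refine ENNReal.le_of_forall_pos_le_add fun ε hε _ => ?_
    obtain ⟨t, ht𝒜, ht⟩ := exists_measure_symmDiff_lt_of_generateFrom_isSetRing (μ := μ + ν)
      h𝒜.isSetRing ⟨{Set.univ}, by simp, by simpa using h𝒜.univ_mem, by simp⟩ hgen
      hs.measurableSet (ENNReal.half_pos (ENNReal.coe_ne_zero.2 hε.ne'))
    have hts : (μ + ν) (s ∆ t) < ε / 2 := by rwa [symmDiff_comm]
    have hμ : μ s ≤ μ t + ε / 2 := tsub_le_iff_left.1 <| le_measure_symmDiff.trans <|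
      (Measure.le_add_right le_rfl : μ ≤ μ + ν) _ |>.trans hts.le
    have hν : ν t ≤ ν s + ε / 2 := tsub_le_iff_left.1 <| le_measure_symmDiff.trans <|
      (Measure.le_add_left le_rfl : ν ≤ μ + ν) _ |>.trans ht.le
    calc μ s - ν s ≤ (μ t - ν t) + ε / 2 + ε / 2 := by
          rw [tsub_le_iff_right]
          calc μ s ≤ μ t + ε / 2 := hμ
            _ ≤ (μ t - ν t) + ν t + ε / 2 := by gcongr; exact le_tsub_add
            _ ≤ (μ t - ν t) + (ν s + ε / 2) + ε / 2 := by gcongr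
            _ = (μ t - ν t) + ε / 2 + ε / 2 + ν s := by ring
      _ ≤ (⨆ t ∈ 𝒜, (μ t - ν t)) + ε := by
          rw [add_assoc, ENNReal.add_halves]
          gcongr
          exact le_iSup₂ (f := fun t _ => μ t - ν t) t ht𝒜
  · calc μ t - ν t ≤ (μ - ν) t :=
          tsub_le_iff_right.2 (by simpa using le_iff'.1 (le_sub_add μ ν) t)
      _ ≤ (μ - ν) Set.univ := measure_mono (Set.subset_univ t)

end MeasureTheory.Measure

section TotalVariation

variable {X : Type*} [MeasurableSpace X]

theorem measurable_measure_sub_apply_univ [MeasurableSpace.CountablyGenerated X]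
    {Ω : Type*} [MeasurableSpace Ω] {κ η : Ω → Measure X} (hκ : Measurable κ)
    (hη : Measurable η) [∀ ω, IsFiniteMeasure (κ ω)] [∀ ω, IsFiniteMeasure (η ω)] :
    Measurable fun ω => (κ ω - η ω) Set.univ := by
  set 𝒜 := generateSetAlgebra (MeasurableSpace.countableGeneratingSet X)
  have hgen : ‹MeasurableSpace X› = MeasurableSpace.generateFrom 𝒜 := by
    rw [generateFrom_generateSetAlgebra_eq, MeasurableSpace.generateFrom_countableGeneratingSet]
  simp_rw [Measure.sub_apply_univ_eq_biSup isSetAlgebra_generateSetAlgebra hgen]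
  refine Measurable.biSup _
    (countable_generateSetAlgebra MeasurableSpace.countable_countableGeneratingSet) fun t ht => ?_
  have htm : MeasurableSet t := hgen ▸ MeasurableSpace.measurableSet_generateFrom ht
  exact ((Measure.measurable_coe htm).comp hκ).sub ((Measure.measurable_coe htm).comp hη)

theorem measurable_tv [MeasurableSpace.CountablyGenerated X]
    {Ω : Type*} [MeasurableSpace Ω] {κ η : Ω → Measure X} (hκ : Measurable κ)
    (hη : Measurable η) [∀ ω, IsFiniteMeasure (κ ω)] [∀ ω, IsFiniteMeasure (η ω)] :
    Measurable fun ω => tv (κ ω) (η ω) :=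
  ((measurable_measure_sub_apply_univ hκ hη).add
    (measurable_measure_sub_apply_univ hη hκ)).ennreal_toReal

theorem tv_le_two (μ ν : Measure X) [IsProbabilityMeasure μ] [IsProbabilityMeasure ν] :
    tv μ ν ≤ 2 := by
  have hle : (μ - ν) Set.univ + (ν - μ) Set.univ ≤ 2 := by
    calc (μ - ν) Set.univ + (ν - μ) Set.univ ≤ μ Set.univ + ν Set.univ :=
          add_le_add (Measure.sub_le (μ := μ) (ν := ν) _) (Measure.sub_le (μ := ν) (ν := μ) _)
      _ = 2 := by simp [one_add_one_eq_two]
  simpa [tv] using ENNReal.toReal_mono (by simp) hle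

end TotalVariation

namespace MeasureTheory.Measure

variable {M : Type*} [Monoid M] [MeasurableSpace M] [MeasurableMul₂ M]

theorem mconv_apply_univ (μ ν : Measure M) [SFinite ν] :
    (μ ∗ₘ ν) Set.univ = μ Set.univ * ν Set.univ := by
  rw [Measure.mconv, map_apply measurable_mul MeasurableSet.univ, Set.preimage_univ,
    ← Set.univ_prod_univ, prod_prod]

theorem mconv_sub_apply_univ_le (α β ν : Measure M) [IsFiniteMeasure α]
    [IsFiniteMeasure β] [IsProbabilityMeasure ν] :
    (α ∗ₘ ν - β ∗ₘ ν) Set.univ ≤ (α - β) Set.univ := by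
  have hle : α ∗ₘ ν ≤ (α - β) ∗ₘ ν + β ∗ₘ ν := by
    rw [← add_mconv]
    exact map_mono (prod_mono (le_sub_add α β) le_rfl) measurable_mul
  calc (α ∗ₘ ν - β ∗ₘ ν) Set.univ ≤ ((α - β) ∗ₘ ν) Set.univ :=
        le_iff'.1 (sub_le_of_le_add hle) _
    _ = (α - β) Set.univ := by simp [mconv_apply_univ]

end MeasureTheory.Measure

section Convolution

variable {M : Type*} [Monoid M] [MeasurableSpace M] [MeasurableMul₂ M]

theorem tv_mconv_le (α β ν : Measure M) [IsFiniteMeasure α] [IsFiniteMeasure β]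
    [IsProbabilityMeasure ν] : tv (α ∗ₘ ν) (β ∗ₘ ν) ≤ tv α β :=
  ENNReal.toReal_mono (by simp [ENNReal.add_eq_top, measure_ne_top])
    (add_le_add (Measure.mconv_sub_apply_univ_le α β ν) (Measure.mconv_sub_apply_univ_le β α ν))

theorem ltrans_eq_dirac_mconv (g : M) (μ : Measure M) [SFinite μ] :
    ltrans g μ = Measure.dirac g ∗ₘ μ :=
  (Measure.dirac_mconv g μ).symm

theorem ltrans_mconv (g : M) (μ ν : Measure M) [SFinite μ] [SFinite ν] :
    ltrans g (μ ∗ₘ ν) = ltrans g μ ∗ₘ ν := by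
  rw [ltrans_eq_dirac_mconv, ltrans_eq_dirac_mconv, Measure.mconv_assoc]

instance isProbabilityMeasure_ltrans (g : M) (μ : Measure M) [IsProbabilityMeasure μ] :
    IsProbabilityMeasure (ltrans g μ) :=
  Measure.isProbabilityMeasure_map (measurable_const_mul g).aemeasurable

theorem measurable_ltrans (μ : Measure M) [SFinite μ] : Measurable fun g : M => ltrans g μ := by
  have h : (fun g : M => ltrans g μ) =
      fun g => (μ.map (Prod.mk g)).map fun p : M × M => p.1 * p.2 := by
    ext1 g
    rw [Measure.map_map measurable_mul measurable_prodMk_left]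
    rfl
  exact h ▸ (Measure.measurable_map _ measurable_mul).comp Measurable.map_prodMk_left

variable (θ : Measure M) [IsProbabilityMeasure θ]

instance isProbabilityMeasure_convPow (k : ℕ) : IsProbabilityMeasure (convPow θ k) := by
  induction k with
  | zero => exact Measure.dirac.isProbabilityMeasure
  | succ k ih => exact Measure.probabilitymeasure_of_probabilitymeasures_mconv θ (convPow θ k)

theorem convPow_succ' (k : ℕ) : convPow θ (k + 1) = convPow θ k ∗ₘ θ := by
  induction k with
  | zero =>
    exact (Measure.mconv_dirac_one θ).trans (Measure.dirac_one_mconv θ).symm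
  | succ k ih =>
    change θ ∗ₘ convPow θ (k + 1) = convPow θ (k + 1) ∗ₘ θ
    rw [ih, ← Measure.mconv_assoc, ← ih]
    rfl

theorem antitone_tv_ltrans_convPow (g : M) :
    Antitone fun k => tv (ltrans g (convPow θ k)) (convPow θ k) :=
  antitone_nat_of_succ_le fun k => by
    rw [convPow_succ', ltrans_mconv]
    exact tv_mconv_le _ _ θ

end Convolution

theorem tendsto_integral_zero_iff_ae_tendsto_zero_of_antitone {α : Type*} [MeasurableSpace α]
    {μ : Measure α} {f : ℕ → α → ℝ} (hf : ∀ n, Integrable (f n) μ)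
    (h_mono : ∀ᵐ x ∂μ, Antitone fun n => f n x) (h_nonneg : ∀ n, 0 ≤ᵐ[μ] f n) :
    Tendsto (fun n => ∫ x, f n x ∂μ) atTop (𝓝 0) ↔
      ∀ᵐ x ∂μ, Tendsto (fun n => f n x) atTop (𝓝 0) := by
  constructor
  · intro h
    refine tendsto_of_integral_tendsto_of_antitone hf (integrable_zero _ _ _) (by simpa using h)
      h_mono ?_
    filter_upwards [ae_all_iff.2 h_nonneg] with x hx using hx
  · intro h
    simpa using integral_tendsto_of_tendsto_of_antitone hf (integrable_zero _ _ _) h_mono h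

theorem stmt7_general {G : Type*} [TopologicalSpace G] [Group G] [IsTopologicalGroup G]
    [SecondCountableTopology G] [MeasurableSpace G] [BorelSpace G]
    (lam : Measure G)
    (θ : Measure G) (hθ : IsProbabilityMeasure θ)
    (m : Measure G) (hm : IsProbabilityMeasure m) (hmlam : m ≪ lam) (hlamm : lam ≪ m) :
    Tendsto (fun k => disc m (convPow θ k)) atTop (nhds 0) ↔
      ∀ᵐ g ∂lam,
        Tendsto (fun k => tv (ltrans g (convPow θ k)) (convPow θ k)) atTop (nhds 0) := by
  have h_int (k : ℕ) : Integrable (fun g => tv (ltrans g (convPow θ k)) (convPow θ k)) m :=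
    .of_bound (measurable_tv (measurable_ltrans _) measurable_const).aestronglyMeasurable 2
      (ae_of_all _ fun g => (Real.norm_of_nonneg ENNReal.toReal_nonneg).trans_le (tv_le_two _ _))
  have h_ae_iff {P : G → Prop} : (∀ᵐ g ∂m, P g) ↔ ∀ᵐ g ∂lam, P g :=
    ⟨fun h => hlamm.ae_le h, fun h => hmlam.ae_le h⟩
  rw [← h_ae_iff]
  exact tendsto_integral_zero_iff_ae_tendsto_zero_of_antitone h_int
    (ae_of_all _ (antitone_tv_ltrans_convPow θ)) fun k => ae_of_all _ fun g => ENNReal.toReal_nonneg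

/-- For a probability measure `θ` on `G` and a probability measure `m`
equivalent to the Haar measure `λ`: `Δ(m, θ^{*k}) → 0` as `k → ∞` iff
`‖gθ^{*k} − θ^{*k}‖ → 0` as `k → ∞` for `λ`-almost every `g ∈ G`. -/
theorem stmt7 {G : Type*} [TopologicalSpace G] [Group G] [IsTopologicalGroup G]
    [LocallyCompactSpace G] [SecondCountableTopology G] [MeasurableSpace G] [BorelSpace G]
    (lam : Measure G) (hlam : lam.IsHaarMeasure)
    (θ : Measure G) (hθ : IsProbabilityMeasure θ)
    (m : Measure G) (hm : IsProbabilityMeasure m) (hmlam : m ≪ lam) (hlamm : lam ≪ m) :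
    Tendsto (fun k => disc m (convPow θ k)) atTop (nhds 0) ↔
      ∀ᵐ g ∂lam,
        Tendsto (fun k => tv (ltrans g (convPow θ k)) (convPow θ k)) atTop (nhds 0) :=
  stmt7_general lam θ hθ m hm hmlam hlamm
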